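/- In the Hecke algebra Hₙ, the sum of the Murphy operators M = ∑_{j=2}^{n} M(j) = ∑_{1 ≤ i < j ≤ n} ω_{(i j)} is central: it commutes with every element of Hₙ. -/

import Mathlib

/-- The defining relations of the Hecke algebra `Hₙ` of type `A` over a
commutative ring `R` with invertible parameter `s` (and `z = s - s⁻¹`), imposed
on the free `R`-algebra on generators `σ₁, …, σ_{n-1}` (indexed by `Fin (n-1)`,
so the generator `σ_k` corresponds to the index `k - 1`):
far-apart commutation, the braid relations, and the quadratic relations
`σᵢ² = z σᵢ + 1`. -/
inductive HeckeRel (R : Type*) [CommRing R] (s : Rˣ) (n : ℕ) :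
    FreeAlgebra R (Fin (n - 1)) → FreeAlgebra R (Fin (n - 1)) → Prop
  | comm (i j : Fin (n - 1)) (h : (i : ℕ) + 2 ≤ (j : ℕ)) :
      HeckeRel R s n (FreeAlgebra.ι R i * FreeAlgebra.ι R j)
        (FreeAlgebra.ι R j * FreeAlgebra.ι R i)
  | braid (i j : Fin (n - 1)) (h : (j : ℕ) = (i : ℕ) + 1) :
      HeckeRel R s n (FreeAlgebra.ι R i * FreeAlgebra.ι R j * FreeAlgebra.ι R i)
        (FreeAlgebra.ι R j * FreeAlgebra.ι R i * FreeAlgebra.ι R j)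
  | quad (i : Fin (n - 1)) :
      HeckeRel R s n (FreeAlgebra.ι R i * FreeAlgebra.ι R i)
        (((s : R) - ((s⁻¹ : Rˣ) : R)) • FreeAlgebra.ι R i + 1)

/-- The Hecke algebra `Hₙ`: the quotient of the free `R`-algebra on
`σ₁, …, σ_{n-1}` by the two-sided ideal generated by the Hecke relations. -/
abbrev Hecke (R : Type*) [CommRing R] (s : Rˣ) (n : ℕ) : Type _ :=
  RingQuot (HeckeRel R s n)

variable {R : Type*} [CommRing R]

/-- The generator `σ_{k+1}` of the Hecke algebra `Hₙ` (0-based index `k`, so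
`heckeGen s n (k-1)` is the generator `σ_k` for `1 ≤ k ≤ n-1`); indices out of
range give `1`. -/
noncomputable def heckeGen (s : Rˣ) (n k : ℕ) : Hecke R s n :=
  if h : k < n - 1 then RingQuot.mkAlgHom R (HeckeRel R s n) (FreeAlgebra.ι R ⟨k, h⟩) else 1

/-- The ascending product `σ_i σ_{i+1} ⋯ σ_{j-1}` in `Hₙ` (1-based labels). -/
noncomputable def ascProd (s : Rˣ) (n i j : ℕ) : Hecke R s n :=
  ((List.range (j - i)).map (fun t => heckeGen s n (i - 1 + t))).prod

/-- The descending product `σ_{j-1} σ_{j-2} ⋯ σ_i` in `Hₙ` (1-based labels). -/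
noncomputable def descProd (s : Rˣ) (n i j : ℕ) : Hecke R s n :=
  (((List.range (j - i)).map (fun t => heckeGen s n (i - 1 + t))).reverse).prod

/-- The element `T(j) = (σ_{j-1} ⋯ σ₁)(σ₁ ⋯ σ_{j-1})` of `Hₙ`, with `T(1) = 1`. -/
noncomputable def heckeT (s : Rˣ) (n j : ℕ) : Hecke R s n :=
  descProd s n 1 j * ascProd s n 1 j

/-- The positive permutation braid element
`ω_{(i j)} = σ_{j-1} ⋯ σ_{i+1} · σᵢ · σ_{i+1} ⋯ σ_{j-1}` of `Hₙ`, for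
`1 ≤ i < j ≤ n` (for `j = i + 1` this is just `σᵢ`). -/
noncomputable def omegaBraid (s : Rˣ) (n i j : ℕ) : Hecke R s n :=
  descProd s n (i + 1) j * heckeGen s n (i - 1) * ascProd s n (i + 1) j

/-- The Murphy operator `M(j) = ∑_{i=1}^{j-1} ω_{(i j)}` in `Hₙ`. -/
noncomputable def murphyOp (s : Rˣ) (n j : ℕ) : Hecke R s n :=
  ∑ i ∈ Finset.Ico 1 j, omegaBraid s n i j

/-
Write `σ_k` for the generators and `M(j)` for the Murphy operators. Peeling off the last factor
pair of each `ω_{(i j+1)}` gives the recursion `M(j+1) = σ_j M(j) σ_j + σ_j`. Since the sum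
commutes with all scalars, it suffices to see that it commutes with each `σ_k`. By the recursion,
`σ_k` commutes with `M(j)` for `j < k` (far commutation) and for `j > k + 1` (induction from
`j = k + 2`, where the braid relation `σ_k σ_{k+1} σ_k = σ_{k+1} σ_k σ_{k+1}` is used). The
remaining pair `M(k) + M(k+1) = X + σ_k X σ_k + σ_k` with `X = M(k)` commutes with `σ_k` by the
quadratic relation, which gives `σ_k (σ_k X σ_k) - (σ_k X σ_k) σ_k = X σ_k - σ_k X`.
-/

theorem RingQuot.commute_of_forall_commute_mkAlgHom_ι {S X : Type*} [CommSemiring S]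
    {r : FreeAlgebra S X → FreeAlgebra S X → Prop} {a : RingQuot r}
    (h : ∀ x, Commute a (RingQuot.mkAlgHom S r (FreeAlgebra.ι S x))) (b : RingQuot r) :
    Commute a b := by
  refine Algebra.commute_of_mem_adjoin_of_forall_mem_commute (R := S)
    (s := Set.range (RingQuot.mkAlgHom S r ∘ FreeAlgebra.ι S)) ?_ ?_
  · rw [Set.range_comp, ← AlgHom.map_adjoin, FreeAlgebra.adjoin_range_ι, Algebra.map_top,
      (AlgHom.range_eq_top _).2 (RingQuot.mkAlgHom_surjective S r)]
    exact Algebra.mem_top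
  · rintro _ ⟨x, rfl⟩
    exact h x

theorem commute_mul_conj_mul_of_braid {M : Type*} [Monoid M] {a b x : M}
    (hab : a * b * a = b * a * b) (hbx : Commute b x) :
    Commute a (b * (a * x * a) * b) :=
  calc a * (b * (a * x * a) * b)
      = a * b * a * x * (a * b) := by simp only [mul_assoc]
    _ = b * a * (b * x) * (a * b) := by rw [hab]; simp only [mul_assoc]
    _ = b * a * x * (b * a * b) := by rw [hbx.eq]; simp only [mul_assoc]
    _ = (b * (a * x * a) * b) * a := by rw [← hab]; simp only [mul_assoc]

theorem commute_add_mul_mul_of_mul_self_eq {S A : Type*} [CommSemiring S] [Ring A] [Algebra S A]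
    {g : A} {z : S} (hg : g * g = z • g + 1) (x : A) :
    Commute g (x + g * x * g) := by
  have left : g * (g * x * g) = z • (g * x * g) + x * g := by
    rw [← mul_assoc, ← mul_assoc, hg, add_mul, add_mul, one_mul, smul_mul_assoc,
      smul_mul_assoc]
  have right : g * x * g * g = z • (g * x * g) + g * x := by
    rw [mul_assoc _ g g, hg, mul_add, mul_one, mul_smul_comm]
  rw [Commute, SemiconjBy, mul_add, add_mul, left, right]
  abel

section MurphyOperators

variable (s : Rˣ) (n : ℕ)

theorem heckeGen_of_lt {k : ℕ} (h : k < n - 1) :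
    heckeGen (R := R) s n k = RingQuot.mkAlgHom R (HeckeRel R s n) (FreeAlgebra.ι R ⟨k, h⟩) :=
  dif_pos h

theorem commute_heckeGen {a b : ℕ} (h : a + 2 ≤ b ∨ b + 2 ≤ a) :
    Commute (heckeGen (R := R) s n a) (heckeGen s n b) := by
  wlog hab : a + 2 ≤ b generalizing a b
  · exact (this h.symm (h.resolve_left hab)).symm
  by_cases hb : b < n - 1
  · rw [heckeGen_of_lt s n (by omega), heckeGen_of_lt s n hb]
    have hrel := RingQuot.mkAlgHom_rel R (HeckeRel.comm (s := s) ⟨a, by omega⟩ ⟨b, hb⟩ hab)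
    rwa [map_mul, map_mul] at hrel
  · rw [show heckeGen (R := R) s n b = 1 from dif_neg hb]
    exact Commute.one_right _

theorem heckeGen_braid {a : ℕ} (h : a + 1 < n - 1) :
    heckeGen (R := R) s n a * heckeGen s n (a + 1) * heckeGen s n a
      = heckeGen s n (a + 1) * heckeGen s n a * heckeGen s n (a + 1) := by
  rw [heckeGen_of_lt s n (by omega), heckeGen_of_lt s n h]
  simpa only [map_mul] using
    RingQuot.mkAlgHom_rel R (HeckeRel.braid (s := s) ⟨a, by omega⟩ ⟨a + 1, h⟩ rfl)

theorem heckeGen_mul_self {a : ℕ} (h : a < n - 1) :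
    heckeGen (R := R) s n a * heckeGen s n a
      = ((s : R) - ((s⁻¹ : Rˣ) : R)) • heckeGen s n a + 1 := by
  rw [heckeGen_of_lt s n h]
  simpa only [map_mul, map_add, map_smul, map_one] using
    RingQuot.mkAlgHom_rel R (HeckeRel.quad (s := s) ⟨a, h⟩)

theorem ascProd_succ {i j : ℕ} (h : i ≤ j) :
    ascProd (R := R) s n i (j + 1) = ascProd s n i j * heckeGen s n (i - 1 + (j - i)) := by
  rw [ascProd, ascProd, Nat.sub_add_comm h, List.range_succ, List.map_append, List.prod_append]
  simp

theorem descProd_succ {i j : ℕ} (h : i ≤ j) :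
    descProd (R := R) s n i (j + 1) = heckeGen s n (i - 1 + (j - i)) * descProd s n i j := by
  rw [descProd, descProd, Nat.sub_add_comm h, List.range_succ, List.map_append,
    List.reverse_append, List.prod_append]
  simp

theorem omegaBraid_self_succ (i : ℕ) :
    omegaBraid (R := R) s n i (i + 1) = heckeGen s n (i - 1) := by
  simp [omegaBraid, ascProd, descProd]

theorem omegaBraid_succ {i j : ℕ} (hij : i < j) :
    omegaBraid (R := R) s n i (j + 1)
      = heckeGen s n (j - 1) * omegaBraid s n i j * heckeGen s n (j - 1) := by
  have hj : i + 1 - 1 + (j - (i + 1)) = j - 1 := by omega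
  rw [omegaBraid, omegaBraid, descProd_succ s n hij, ascProd_succ s n hij, hj]
  simp only [mul_assoc]

theorem murphyOp_of_le_one {j : ℕ} (h : j ≤ 1) : murphyOp (R := R) s n j = 0 := by
  rw [murphyOp, Finset.Ico_eq_empty_of_le h, Finset.sum_empty]

theorem murphyOp_succ_succ (j : ℕ) :
    murphyOp (R := R) s n (j + 2)
      = heckeGen s n j * murphyOp s n (j + 1) * heckeGen s n j + heckeGen s n j := by
  rw [murphyOp, Finset.sum_Ico_succ_top (by omega), omegaBraid_self_succ, murphyOp,
    Finset.mul_sum, Finset.sum_mul]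
  congr 1
  refine Finset.sum_congr rfl fun i hi => ?_
  rw [Finset.mem_Ico] at hi
  exact omegaBraid_succ s n hi.2

theorem commute_heckeGen_murphyOp_of_le {k : ℕ} :
    ∀ {j : ℕ}, j ≤ k → Commute (heckeGen (R := R) s n k) (murphyOp s n j)
  | 0, _ | 1, _ => by rw [murphyOp_of_le_one s n (by omega)]; exact Commute.zero_right _
  | j + 2, h => by
    have hgen : Commute (heckeGen (R := R) s n k) (heckeGen s n j) :=
      commute_heckeGen s n (by omega)
    rw [murphyOp_succ_succ]
    exact ((hgen.mul_right (commute_heckeGen_murphyOp_of_le (by omega))).mul_right hgen).add_right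
      hgen

theorem commute_heckeGen_murphyOp_add {k : ℕ} (hk : k < n - 1) :
    Commute (heckeGen (R := R) s n k) (murphyOp s n (k + 1) + murphyOp s n (k + 2)) := by
  rw [murphyOp_succ_succ, ← add_assoc]
  exact (commute_add_mul_mul_of_mul_self_eq (heckeGen_mul_self s n hk) _).add_right
    (Commute.refl _)

theorem commute_heckeGen_murphyOp_of_lt {k j : ℕ} (hk : k + 1 < n - 1) (hj : k + 3 ≤ j) :
    Commute (heckeGen (R := R) s n k) (murphyOp s n j) := by
  induction j, hj using Nat.le_induction with
  | base =>
    set a := heckeGen (R := R) s n k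
    set b := heckeGen (R := R) s n (k + 1)
    have hbraid : a * b * a = b * a * b := heckeGen_braid s n hk
    have hexpand : murphyOp s n (k + 3)
        = b * (a * murphyOp s n (k + 1) * a) * b + (b + a * b * a) := by
      rw [murphyOp_succ_succ, murphyOp_succ_succ, hbraid]
      noncomm_ring
    rw [hexpand]
    exact (commute_mul_conj_mul_of_braid hbraid
      (commute_heckeGen_murphyOp_of_le s n le_rfl)).add_right
        (commute_add_mul_mul_of_mul_self_eq (heckeGen_mul_self s n (by omega)) b)
  | succ j hj ih =>
    obtain ⟨j, rfl⟩ : ∃ i, j = i + 1 := ⟨j - 1, by omega⟩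
    have hgen : Commute (heckeGen (R := R) s n k) (heckeGen s n j) :=
      commute_heckeGen s n (by omega)
    rw [murphyOp_succ_succ]
    exact ((hgen.mul_right ih).mul_right hgen).add_right hgen

theorem sum_Icc_murphyOp_eq_sum_range :
    ∑ j ∈ Finset.Icc 2 n, murphyOp (R := R) s n j
      = ∑ j ∈ Finset.range (n + 1), murphyOp s n j :=
  Finset.sum_subset
    (fun j hj => Finset.mem_range.mpr (Nat.lt_succ_of_le (Finset.mem_Icc.mp hj).2))
    fun j hj hj' => murphyOp_of_le_one s n <| by
      rw [Finset.mem_range] at hj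
      rw [Finset.mem_Icc] at hj'
      omega

theorem commute_heckeGen_sum_murphyOp {k : ℕ} (hk : k < n - 1) :
    Commute (heckeGen (R := R) s n k) (∑ j ∈ Finset.range (n + 1), murphyOp s n j) := by
  rw [← Finset.sum_range_add_sum_Ico _ (by omega : k + 3 ≤ n + 1), Finset.sum_range_succ,
    Finset.sum_range_succ, add_assoc (Finset.sum _ _)]
  refine ((Commute.sum_right _ _ _ fun j hj => ?_).add_right
    (commute_heckeGen_murphyOp_add s n hk)).add_right (Commute.sum_right _ _ _ fun j hj => ?_)
  · exact commute_heckeGen_murphyOp_of_le s n (Nat.lt_succ_iff.mp (Finset.mem_range.mp hj))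
  · rw [Finset.mem_Ico] at hj
    exact commute_heckeGen_murphyOp_of_lt s n (by omega) hj.1

end MurphyOperators

theorem sum_murphyOp_central_general (s : Rˣ) (n : ℕ) (x : Hecke R s n) :
    (∑ j ∈ Finset.Icc 2 n, murphyOp s n j) * x
      = x * ∑ j ∈ Finset.Icc 2 n, murphyOp s n j := by
  refine RingQuot.commute_of_forall_commute_mkAlgHom_ι (fun k => ?_) x
  rw [sum_Icc_murphyOp_eq_sum_range, ← heckeGen_of_lt]
  exact (commute_heckeGen_sum_murphyOp s n k.2).symm

/-- In the Hecke algebra `Hₙ`, the sum of the Murphy operators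
`M = ∑_{j=2}^{n} M(j) = ∑_{1 ≤ i < j ≤ n} ω_{(i j)}` is central: it commutes
with every element of `Hₙ`. -/
theorem sum_murphyOp_central (s : Rˣ) (n : ℕ) (hn : 1 ≤ n) (x : Hecke R s n) :
    (∑ j ∈ Finset.Icc 2 n, murphyOp s n j) * x
      = x * ∑ j ∈ Finset.Icc 2 n, murphyOp s n j :=
  sum_murphyOp_central_general s n x
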